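/- Suppose (λ_i)_{i=1}^n are nonnegative random variables and t > 0, p ≥ 1 satisfy: (i) each λ_i ≤ 1/t almost surely, and (ii) E[Σ_{i : λ_i > 8/3} λ_i²] ≤ e^{-c t^{-1/2}} · n for a constant c ∈ (0, 1/15). Then if t = a/p² with 0 < a < c⁴, one has E[Σ_{i=1}^n λ_i^p] ≤ (3p)^p n + e^{-(c a^{-1/2} + log a) p} p^{2p} n ≤ (6p)^{2p} n. -/
import Mathlib
open Real MeasureTheory ProbabilityTheory

lemma key_exp_eq (a p c : ℝ) (ha : 0 < a) (hp : 0 < p) :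
    (1/(a/p^2)) ^ p * Real.exp (-c * (a/p^2) ^ (-(1:ℝ)/2))
      = Real.exp (-(c * a ^ (-(1:ℝ)/2) + Real.log a) * p) * p ^ (2*p) := by
  have hp2 : (0:ℝ) < p ^ 2 := by positivity
  have h1 : (1:ℝ)/(a/p^2) = p^2/a := by field_simp
  have hlogdiv : Real.log (a / p^2) = Real.log a - 2 * Real.log p := by
    rw [Real.log_div ha.ne' hp2.ne', Real.log_pow]; push_cast; ring
  have hlogdiv2 : Real.log (p^2 / a) = 2 * Real.log p - Real.log a := by
    rw [Real.log_div hp2.ne' ha.ne', Real.log_pow]; push_cast; ring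
  rw [h1, Real.rpow_def_of_pos (by positivity : (0:ℝ) < p^2/a),
      Real.rpow_def_of_pos (by positivity : (0:ℝ) < a/p^2),
      Real.rpow_def_of_pos ha, Real.rpow_def_of_pos hp, hlogdiv, hlogdiv2,
      show (Real.log a - 2*Real.log p) * (-(1:ℝ)/2) = Real.log a * (-(1:ℝ)/2) + Real.log p by ring,
      Real.exp_add, Real.exp_log hp, ← Real.exp_add, ← Real.exp_add]
  congr 1
  ring

lemma key_log (a c : ℝ) (hc0 : 0 < c) (hc1 : c < 1/15) (ha : 0 < a) (hac : a < c^4) :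
    0 ≤ c * a ^ (-(1:ℝ)/2) + Real.log a := by
  set u := a ^ (-(1:ℝ)/8) with hu
  have hu0 : 0 < u := Real.rpow_pos_of_pos ha _
  have hlog : Real.log a = -8 * Real.log u := by
    rw [hu, Real.log_rpow ha]; ring
  have hu4 : a ^ (-(1:ℝ)/2) = u^4 := by
    rw [hu, ← Real.rpow_natCast (a ^ (-(1:ℝ)/8)) 4, ← Real.rpow_mul ha.le]; norm_num
  have h14 : a ^ ((1:ℝ)/4) ≤ c := by
    calc a ^ ((1:ℝ)/4) ≤ (c^4) ^ ((1:ℝ)/4) :=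
          Real.rpow_le_rpow ha.le hac.le (by norm_num)
      _ = c := by
          rw [← Real.rpow_natCast c 4, ← Real.rpow_mul hc0.le]; norm_num
  have hu2 : u^2 * a ^ ((1:ℝ)/4) = 1 := by
    rw [hu, ← Real.rpow_natCast (a ^ (-(1:ℝ)/8)) 2, ← Real.rpow_mul ha.le, ← Real.rpow_add ha]
    norm_num
  have hqu : 1 ≤ c * u^2 := by
    nlinarith [Real.rpow_pos_of_pos ha ((1:ℝ)/4), sq_nonneg u]
  have hexp : Real.exp 1 * Real.log u ≤ u := by
    have h := Real.add_one_le_exp (Real.log u - 1)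
    have h2 : Real.exp (Real.log u - 1) * Real.exp 1 = u := by
      rw [← Real.exp_add]; simp [Real.exp_log hu0]
    nlinarith [Real.exp_pos (1:ℝ)]
  have h8 : 8 * Real.log u ≤ 3 * u := by
    rcases le_or_gt (Real.log u) 0 with h | h
    · nlinarith
    · nlinarith [Real.exp_one_gt_d9]
  have hu15 : 15 ≤ u^2 := by nlinarith
  have hu3 : 3 ≤ u := by nlinarith
  have h3u : 3*u ≤ u^2 := by nlinarith
  have hcu : u^2 ≤ c * u^4 := by nlinarith [sq_nonneg u]
  rw [hlog, hu4]
  linarith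

theorem stmt_2 {Ω : Type*} [MeasureSpace Ω] [IsProbabilityMeasure (ℙ : Measure Ω)]
    (n : ℕ) (l : Fin n → Ω → ℝ) (t p c a : ℝ)
    (ht : 0 < t) (hp : 1 ≤ p) (hc : c ∈ Set.Ioo (0 : ℝ) (1/15))
    (hmeas : ∀ i, Measurable (l i))
    (hnonneg : ∀ i, ∀ᵐ ω ∂(ℙ : Measure Ω), 0 ≤ l i ω)
    (hbdd : ∀ i, ∀ᵐ ω ∂(ℙ : Measure Ω), l i ω ≤ 1/t)
    (htail : ∫ ω, (∑ i, if (8:ℝ)/3 < l i ω then (l i ω)^2 else 0) ∂(ℙ : Measure Ω) ≤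
      Real.exp (-c * t ^ (-(1:ℝ)/2)) * n)
    (ha : 0 < a) (hac : a < c^4) (hta : t = a / p^2) :
    (∫ ω, (∑ i, (l i ω) ^ p) ∂(ℙ : Measure Ω) ≤
        (3*p) ^ p * n + Real.exp (-(c * a ^ (-(1:ℝ)/2) + Real.log a) * p) * p ^ (2*p) * n) ∧
    (3*p) ^ p * n + Real.exp (-(c * a ^ (-(1:ℝ)/2) + Real.log a) * p) * p ^ (2*p) * n ≤
      (6*p) ^ (2*p) * n := by
  have hp0 : (0:ℝ) < p := by linarith
  have hkey : (1/t) ^ p * Real.exp (-c * t ^ (-(1:ℝ)/2))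
      = Real.exp (-(c * a ^ (-(1:ℝ)/2) + Real.log a) * p) * p ^ (2*p) := by
    rw [hta]; exact key_exp_eq a p c ha hp0
  have hK : (0:ℝ) ≤ (1/t) ^ p := Real.rpow_nonneg (by positivity) p
  set K := ((1:ℝ)/t) ^ p with hKdef
  -- integrability
  have hs_meas : ∀ i : Fin n, Measurable (fun ω => if (8:ℝ)/3 < l i ω then (l i ω)^2 else 0) :=
    fun i => Measurable.ite (measurableSet_lt measurable_const (hmeas i))
      ((hmeas i).pow_const 2) measurable_const
  have hs_int : Integrable (fun ω => ∑ i, if (8:ℝ)/3 < l i ω then (l i ω)^2 else 0)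
      (ℙ : Measure Ω) := by
    apply integrable_finset_sum
    intro i _
    refine (integrable_const ((1/t)^2 : ℝ)).mono' (hs_meas i).aestronglyMeasurable ?_
    filter_upwards [hnonneg i, hbdd i] with ω h1 h2
    by_cases hx : (8:ℝ)/3 < l i ω
    · simp only [if_pos hx]
      rw [Real.norm_eq_abs, abs_of_nonneg (by positivity)]
      have h1t : (0:ℝ) ≤ 1/t := by positivity
      nlinarith
    · simp only [if_neg hx, norm_zero]
      positivity
  have hf_int : Integrable (fun ω => ∑ i, (l i ω) ^ p) (ℙ : Measure Ω) := by
    apply integrable_finset_sum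
    intro i _
    refine (integrable_const ((1/t)^p : ℝ)).mono'
      ((hmeas i).pow_const p).aestronglyMeasurable ?_
    filter_upwards [hnonneg i, hbdd i] with ω h1 h2
    rw [Real.norm_eq_abs, abs_of_nonneg (Real.rpow_nonneg h1 p)]
    exact Real.rpow_le_rpow h1 h2 hp0.le
  -- pointwise bound
  have hle : (fun ω => ∑ i, (l i ω) ^ p) ≤ᵐ[(ℙ : Measure Ω)]
      (fun ω => (n:ℝ) * (8/3:ℝ)^p + K * ∑ i, if (8:ℝ)/3 < l i ω then (l i ω)^2 else 0) := by
    have hae : ∀ᵐ ω ∂(ℙ : Measure Ω), ∀ i, 0 ≤ l i ω ∧ l i ω ≤ 1/t := by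
      rw [ae_all_iff]
      intro i
      filter_upwards [hnonneg i, hbdd i] with ω h1 h2
      exact ⟨h1, h2⟩
    filter_upwards [hae] with ω hω
    have hterm : ∀ i : Fin n, (l i ω) ^ p ≤
        (8/3:ℝ)^p + K * (if (8:ℝ)/3 < l i ω then (l i ω)^2 else 0) := by
      intro i
      obtain ⟨h1, h2⟩ := hω i
      by_cases hx : (8:ℝ)/3 < l i ω
      · simp only [if_pos hx]
        have hxp : (l i ω) ^ p ≤ K := Real.rpow_le_rpow h1 h2 hp0.le
        have h1x2 : (1:ℝ) ≤ (l i ω)^2 := by nlinarith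
        have hB : (0:ℝ) ≤ (8/3:ℝ)^p := Real.rpow_nonneg (by norm_num) p
        nlinarith [le_mul_of_one_le_right hK h1x2]
      · simp only [if_neg hx, mul_zero, add_zero]
        exact Real.rpow_le_rpow h1 (not_lt.1 hx) hp0.le
    calc ∑ i, (l i ω) ^ p
        ≤ ∑ i, ((8/3:ℝ)^p + K * (if (8:ℝ)/3 < l i ω then (l i ω)^2 else 0)) :=
          Finset.sum_le_sum fun i _ => hterm i
      _ = (n:ℝ) * (8/3:ℝ)^p + K * ∑ i, (if (8:ℝ)/3 < l i ω then (l i ω)^2 else 0) := by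
          rw [Finset.sum_add_distrib, Finset.sum_const, Finset.card_univ, Fintype.card_fin,
            nsmul_eq_mul, ← Finset.mul_sum]
  have h83 : ((8:ℝ)/3)^p ≤ (3*p)^p :=
    Real.rpow_le_rpow (by norm_num) (by linarith) hp0.le
  have hfirst : ∫ ω, (∑ i, (l i ω) ^ p) ∂(ℙ : Measure Ω) ≤
      (3*p) ^ p * n + Real.exp (-(c * a ^ (-(1:ℝ)/2) + Real.log a) * p) * p ^ (2*p) * n := by
    calc ∫ ω, (∑ i, (l i ω) ^ p) ∂(ℙ : Measure Ω)
        ≤ ∫ ω, ((n:ℝ) * (8/3:ℝ)^p +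
            K * ∑ i, if (8:ℝ)/3 < l i ω then (l i ω)^2 else 0) ∂(ℙ : Measure Ω) :=
          integral_mono_ae hf_int ((integrable_const _).add (hs_int.const_mul K)) hle
      _ = (n:ℝ) * (8/3:ℝ)^p + K *
            ∫ ω, (∑ i, if (8:ℝ)/3 < l i ω then (l i ω)^2 else 0) ∂(ℙ : Measure Ω) := by
          rw [integral_add (integrable_const _) (hs_int.const_mul K), integral_const,
            integral_const_mul]
          simp
      _ ≤ (n:ℝ) * (8/3:ℝ)^p + K * (Real.exp (-c * t ^ (-(1:ℝ)/2)) * n) := by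
          have := mul_le_mul_of_nonneg_left htail hK
          linarith
      _ = (8/3:ℝ)^p * n + (K * Real.exp (-c * t ^ (-(1:ℝ)/2))) * n := by ring
      _ ≤ (3*p) ^ p * n + Real.exp (-(c * a ^ (-(1:ℝ)/2) + Real.log a) * p) * p ^ (2*p) * n := by
          rw [hKdef, hkey]
          have : ((8:ℝ)/3)^p * n ≤ (3*p)^p * n :=
            mul_le_mul_of_nonneg_right h83 (Nat.cast_nonneg n)
          linarith
  refine ⟨hfirst, ?_⟩
  -- second inequality
  have hE : Real.exp (-(c * a ^ (-(1:ℝ)/2) + Real.log a) * p) ≤ 1 := by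
    rw [Real.exp_le_one_iff]
    have h0 := key_log a c hc.1 hc.2 ha hac
    nlinarith
  have hE0 : (0:ℝ) ≤ Real.exp (-(c * a ^ (-(1:ℝ)/2) + Real.log a) * p) := (Real.exp_pos _).le
  have hA : (3*p)^p ≤ (3*p)^(2*p) :=
    Real.rpow_le_rpow_of_exponent_le (by linarith) (by linarith)
  have hB : p^(2*p) ≤ (3*p)^(2*p) :=
    Real.rpow_le_rpow hp0.le (by linarith) (by linarith)
  have hmul : ((6:ℝ)*p)^(2*p) = 2^(2*p) * (3*p)^(2*p) := by
    rw [← Real.mul_rpow (by norm_num) (by linarith)]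
    congr 1
    ring
  have h4 : (4:ℝ) ≤ 2^(2*p) := by
    have h2 : (2:ℝ)^((2:ℕ):ℝ) ≤ 2^(2*p) :=
      Real.rpow_le_rpow_of_exponent_le one_le_two (by push_cast; linarith)
    rwa [Real.rpow_natCast, show ((2:ℝ)^(2:ℕ)) = 4 by norm_num] at h2
  have hpos : (0:ℝ) ≤ (3*p)^(2*p) := Real.rpow_nonneg (by linarith) _
  have hEp : Real.exp (-(c * a ^ (-(1:ℝ)/2) + Real.log a) * p) * p^(2*p) ≤ p^(2*p) :=
    mul_le_of_le_one_left (Real.rpow_nonneg hp0.le _) hE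
  have hcoeff : (3*p)^p + Real.exp (-(c * a ^ (-(1:ℝ)/2) + Real.log a) * p) * p^(2*p)
      ≤ (6*p)^(2*p) := by
    rw [hmul]
    nlinarith
  calc (3*p) ^ p * n + Real.exp (-(c * a ^ (-(1:ℝ)/2) + Real.log a) * p) * p ^ (2*p) * n
      = ((3*p)^p + Real.exp (-(c * a ^ (-(1:ℝ)/2) + Real.log a) * p) * p^(2*p)) * n := by ring
    _ ≤ (6*p)^(2*p) * n := mul_le_mul_of_nonneg_right hcoeff (Nat.cast_nonneg n)
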